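/- arXiv:2302.11370 — 5 statements merged into one kernel-verified Lean document; each statement's English description precedes it below -/
import Mathlib

section
/- For any top-heavy recall-level metric with normalization satisfying n(1,1) = 1, the minimum over all nonempty subsets U of the relevant set of the metric value computed on U (treating U as the relevant set) equals e(P_m), the exposure of the lowest-ranked relevant item. -/
/-- The value of a recall-level metric with exposure `e` and normalization `n` on a
(relevant) set of positions `U`: `Σ_{i < |U|} e(Q_i)·n(i+1,|U|)` where `Q` is the
increasing enumeration of `U`. -/
noncomputable def relMetric (e : ℕ → ℝ) (n : ℕ → ℕ → ℝ) (U : Finset ℕ) : ℝ :=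
  ∑ i ∈ Finset.range U.card, e ((U.sort (· ≤ ·)).getD i 0) * n (i + 1) U.card

/-- For any top-heavy recall-level metric with `n(1,1) = 1`, nonnegative normalization,
and strictly decreasing nonnegative exposure, the minimum over all nonempty subsets `U`
of the set `S` of positions of relevant items of the metric value computed on `U`
(treating `U` as the relevant set) equals `e(P_m)`, the exposure of the lowest-ranked
relevant item. -/
theorem worst_case_user_eq_tse
    (e : ℕ → ℝ) (he : StrictAnti e) (he0 : ∀ i, 0 ≤ e i)
    (n : ℕ → ℕ → ℝ) (hn : ∀ i c, 0 ≤ n i c) (hn11 : n 1 1 = 1)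
    (htop : ∀ U : Finset ℕ, ∀ j < U.card,
      relMetric e n U ≥ ∑ i ∈ Finset.Ico j U.card,
        e ((U.sort (· ≤ ·)).getD i 0) * n (i - j + 1) (U.card - j))
    (S : Finset ℕ) (hS : S.Nonempty) :
    IsLeast {x : ℝ | ∃ U : Finset ℕ, U ⊆ S ∧ U.Nonempty ∧ x = relMetric e n U}
      (e (S.max' hS)) := by
  constructor
  · refine ⟨{S.max' hS}, ?_, ⟨_, Finset.mem_singleton_self _⟩, ?_⟩
    · simpa using S.max'_mem hS
    · simp [relMetric, hn11]
  · rintro x ⟨U, hUS, hU, rfl⟩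
    have hcard : 0 < U.card := Finset.card_pos.mpr hU
    have h := htop U (U.card - 1) (Nat.sub_lt hcard one_pos)
    have hlen : (U.sort (· ≤ ·)).length = U.card := Finset.length_sort _
    have hlt : U.card - 1 < (U.sort (· ≤ ·)).length := by omega
    have hget : (U.sort (· ≤ ·)).getD (U.card - 1) 0 = U.max' hU := by
      rw [List.getD_eq_getElem _ _ hlt]
      have := Finset.sorted_last_eq_max'_aux U (by omega) hU
      simpa [hlen] using this
    have hIco : Finset.Ico (U.card - 1) U.card = {U.card - 1} := by
      rw [show U.card = (U.card - 1) + 1 by omega]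
      exact Nat.Ico_succ_singleton _
    rw [hIco, Finset.sum_singleton, hget, Nat.sub_self,
      show U.card - (U.card - 1) = 1 by omega, hn11, mul_one] at h
    calc e (S.max' hS) ≤ e (U.max' hU) :=
          he.antitone (S.le_max' _ (hUS (U.max'_mem hU)))
      _ ≤ relMetric e n U := h
end

section
/- With pessimistic imputation, appending a relevant item to a truncated ranking strictly improves lexicographic recall, provided the number of remaining unretrieved relevant items is less than the number of unretrieved corpus items. -/
/-- Leximin (bottom-up lexicographic) preference between relevant-position vectors
indexed by `{0,…,m-1}`: `P` preferred to `P'` iff at some index `k < m`, `P k < P' k`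
and all later entries agree. -/
def lexiPrefN (m : ℕ) (P P' : ℕ → ℕ) : Prop :=
  ∃ k, k < m ∧ P k < P' k ∧ ∀ j, k < j → j < m → P j = P' j

/-- With pessimistic imputation (unretrieved relevant items placed at the very bottom
positions `N-(m-m̃)+1,…,N`), appending one more relevant item at position `k+1` to a
top-`k` ranking that retrieved `m̃ < m` relevant items at positions `Q 0 < … < Q (m̃-1) ≤ k`
strictly improves lexicographic recall, provided the number of remaining unretrieved
relevant items is less than the number of unretrieved corpus items (`m - m̃ < N - k`). -/
theorem append_relevant_improves_lexirecall
    (N k m mt : ℕ) (hk : k < N) (hmt : mt < m) (hm : m ≤ N)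
    (hroom : m - mt < N - k)
    (Q : ℕ → ℕ) (hQ : StrictMonoOn Q (Set.Iio mt))
    (hQr : ∀ i < mt, 1 ≤ Q i ∧ Q i ≤ k) :
    lexiPrefN m
      (fun i => if i < mt then Q i else if i = mt then k + 1 else N - (m - 1 - i))
      (fun i => if i < mt then Q i else N - (m - 1 - i)) := by
  refine ⟨mt, hmt, ?_, ?_⟩
  · simp only [lt_irrefl, if_false, if_pos rfl, if_true]
    omega
  · intro j hj1 hj2
    have h1 : ¬ j < mt := by omega
    have h2 : j ≠ mt := by omega
    simp [h1, h2]
end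

section
/- With pessimistic imputation, appending a nonrelevant item to a truncated ranking leaves the sorted relevant-position vector, and hence lexicographic recall and every recall-level metric value, unchanged. -/
/-- 1-indexed positions of the retrieved relevant items in a top-`k` ranking `l`. -/
def retrievedPos {N : ℕ} (R : Finset (Fin N)) (l : List (Fin N)) : List ℕ :=
  ((l.zipIdx.map Prod.swap).filter (fun p => decide (p.2 ∈ R))).map (fun p => p.1 + 1)

/-- Pessimistically imputed sorted relevant-position vector: retrieved relevant
positions followed by the bottom positions `N - u + 1, …, N` for the `u` unretrieved
relevant items. -/
def imputedPos {N : ℕ} (R : Finset (Fin N)) (l : List (Fin N)) : List ℕ :=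
  retrievedPos R l ++
    (List.range (R.card - (retrievedPos R l).length)).map
      (fun j => N - (R.card - (retrievedPos R l).length) + 1 + j)

lemma retrievedPos_append_nonrel {N : ℕ} (R : Finset (Fin N)) (l : List (Fin N))
    (x : Fin N) (hx : x ∉ R) :
    retrievedPos R (l ++ [x]) = retrievedPos R l := by
  unfold retrievedPos
  rw [List.zipIdx_append, List.map_append, List.filter_append]
  simp [hx]

/-- With pessimistic imputation, appending a nonrelevant item to a truncated ranking
leaves the sorted relevant-position vector unchanged, and hence lexicographic recall
and every recall-level metric value (`Σ_i e(P_i)·n(i+1,m)`) unchanged. -/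
theorem append_nonrelevant_preserves_imputed_positions
    {N : ℕ} (R : Finset (Fin N)) (l : List (Fin N)) (hl : l.Nodup)
    (x : Fin N) (hx : x ∉ R) (hxl : x ∉ l) (hlen : l.length < N) :
    imputedPos R (l ++ [x]) = imputedPos R l
    ∧ ∀ (e : ℕ → ℝ) (n : ℕ → ℕ → ℝ),
        (∑ i ∈ Finset.range R.card,
            e ((imputedPos R (l ++ [x])).getD i 0) * n (i + 1) R.card)
          = ∑ i ∈ Finset.range R.card,
              e ((imputedPos R l).getD i 0) * n (i + 1) R.card := by
  have h : imputedPos R (l ++ [x]) = imputedPos R l := by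
    unfold imputedPos
    rw [retrievedPos_append_nonrel R l x hx]
  exact ⟨h, fun e n => by rw [h]⟩
end

section
/- Average precision, with exposure e(i) = 1/i and normalization n(i,m) = i/m, is top-heavy: for all 0 ≤ j < m, Σ_{i=1}^m (1/P_i)(i/m) ≥ Σ_{i=j+1}^m (1/P_i)((i−j)/(m−j)). -/
/-- Average precision, with exposure `e(i) = 1/i` and normalization `n(i,m) = i/m`,
is top-heavy: for all `0 ≤ j < m`,
`Σ_{i=1}^m (1/P_i)(i/m) ≥ Σ_{i=j+1}^m (1/P_i)((i−j)/(m−j))`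
(here indices are 0-based, so recall level `i+1` corresponds to index `i`). -/
theorem average_precision_top_heavy
    (m : ℕ) (P : ℕ → ℕ) (hP : StrictMono P) (hP1 : ∀ i, 1 ≤ P i) :
    ∀ j < m,
      (∑ i ∈ Finset.range m, (1 / (P i : ℝ)) * (((i : ℝ) + 1) / (m : ℝ)))
        ≥ ∑ i ∈ Finset.Ico j m,
            (1 / (P i : ℝ)) * (((i : ℝ) - (j : ℝ) + 1) / ((m : ℝ) - (j : ℝ))) := by
  intro j hj
  have hm : (0 : ℝ) < m := by exact_mod_cast Nat.pos_of_ne_zero (by omega)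
  have hmj : (0 : ℝ) < (m : ℝ) - j := by
    have : (j : ℝ) < m := by exact_mod_cast hj
    linarith
  calc ∑ i ∈ Finset.Ico j m,
          (1 / (P i : ℝ)) * (((i : ℝ) - (j : ℝ) + 1) / ((m : ℝ) - (j : ℝ)))
      ≤ ∑ i ∈ Finset.Ico j m, (1 / (P i : ℝ)) * (((i : ℝ) + 1) / (m : ℝ)) := by
        apply Finset.sum_le_sum
        intro i hi
        obtain ⟨hji, him⟩ := Finset.mem_Ico.mp hi
        have hPi : (0 : ℝ) < P i := by exact_mod_cast (hP1 i)
        apply mul_le_mul_of_nonneg_left _ (by positivity)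
        rw [div_le_div_iff₀ hmj hm]
        have h1 : (j : ℝ) ≤ i := by exact_mod_cast hji
        have h2 : (i : ℝ) + 1 ≤ m := by exact_mod_cast him
        have h3 : (0 : ℝ) ≤ j := by positivity
        nlinarith [mul_nonneg h3 (by linarith : (0:ℝ) ≤ (m : ℝ) - 1 - i)]
    _ ≤ ∑ i ∈ Finset.range m, (1 / (P i : ℝ)) * (((i : ℝ) + 1) / (m : ℝ)) := by
        rw [Finset.range_eq_Ico]
        apply Finset.sum_le_sum_of_subset_of_nonneg
        · exact Finset.Ico_subset_Ico (Nat.zero_le j) le_rfl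
        · intro i _ _
          have hPi : (0 : ℝ) < P i := by exact_mod_cast (hP1 i)
          positivity
end

section
/- For a bottom-heavy weight vector w with Σ w_i = 1 and w_1 ≪ … ≪ w_m chosen as w_i = Δ^{m−i}/(1+Δ)^{m+1−i} for i > 1 and w_1 = Δ^{m−1}/(1+Δ)^{m−1}, where Δ = 1/(N+ε) with ε ∈ (0,1), the linear functional x ↦ Σ w_i x_i on decreasing allocation vectors x_i = (N − P_i)/N represents leximin: for two distinct sorted position vectors P, P', Σ w_i (N−P_i)/N > Σ w_i (N−P'_i)/N iff P is leximin-preferred to P' (i.e., P_k < P'_k at the largest differing index k). -/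
noncomputable def wt (m : ℕ) (d : ℝ) (i : ℕ) : ℝ :=
  if i = 0 then d^(m-1)/(1+d)^(m-1) else d^(m-1-i)/(1+d)^(m-i)

lemma wt_pos {d : ℝ} (m : ℕ) (hd : 0 < d) (i : ℕ) : 0 < wt m d i := by
  have h1 : (0:ℝ) < 1 + d := by linarith
  unfold wt
  split <;> positivity

lemma wt_sum {d : ℝ} (m : ℕ) (hd : 0 < d) :
    ∀ k, 1 ≤ k → k ≤ m →
      ∑ i ∈ Finset.range k, wt m d i = d^(m-k)/(1+d)^(m-k) := by
  intro k
  induction k with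
  | zero => intro h; omega
  | succ k ih =>
    intro _ hk1
    rcases Nat.eq_zero_or_pos k with rfl | hk
    · simp [wt]
    · rw [Finset.sum_range_succ, ih hk (by omega)]
      obtain ⟨t, ht⟩ : ∃ t, m - k = t + 1 := ⟨m - k - 1, by omega⟩
      have h1 : m - 1 - k = t := by omega
      have h2 : m - (k+1) = t := by omega
      have h1d : (0:ℝ) < 1 + d := by linarith
      rw [wt, if_neg (by omega : k ≠ 0), ht, h1, h2]
      field_simp
      ring

lemma wt_top {d : ℝ} (m : ℕ) (hd : 0 < d) (k : ℕ) (hk : 1 ≤ k) (hkm : k < m) :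
    wt m d k = (1/d) * ∑ i ∈ Finset.range k, wt m d i := by
  rw [wt_sum m hd k hk hkm.le, wt, if_neg (by omega : k ≠ 0)]
  obtain ⟨t, ht⟩ : ∃ t, m - k = t + 1 := ⟨m - k - 1, by omega⟩
  have h1 : m - 1 - k = t := by omega
  have h1d : (0:ℝ) < 1 + d := by linarith
  rw [ht, h1]
  field_simp
  ring

lemma sum_pos_of_top {d : ℝ} (N m : ℕ) (hd : 0 < d) (hdN : (N:ℝ) - 1 < 1/d)
    (P P' : ℕ → ℕ) (hPr : ∀ i < m, 1 ≤ P i ∧ P i ≤ N) (hP'r : ∀ i < m, 1 ≤ P' i ∧ P' i ≤ N)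
    (k : ℕ) (hkm : k < m) (hk : P k < P' k) :
    0 < ∑ i ∈ Finset.range (k+1), wt m d i * ((P' i : ℝ) - P i) := by
  rw [Finset.sum_range_succ]
  have hwk := wt_pos m hd k
  have h1 : (1:ℝ) ≤ (P' k : ℝ) - P k := by
    have : P k + 1 ≤ P' k := hk
    have := (Nat.cast_le (α := ℝ)).2 this
    push_cast at this ⊢
    linarith
  rcases Nat.eq_zero_or_pos k with rfl | hk1
  · simp only [Finset.range_zero, Finset.sum_empty, zero_add]
    nlinarith
  · set S := ∑ i ∈ Finset.range k, wt m d i with hS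
    have hSpos : 0 < S := Finset.sum_pos (fun i _ => wt_pos m hd i) (by simp; omega)
    have hbelow : -((N:ℝ) - 1) * S ≤ ∑ i ∈ Finset.range k, wt m d i * ((P' i : ℝ) - P i) := by
      rw [Finset.mul_sum]
      apply Finset.sum_le_sum
      intro i hi
      have him : i < m := by
        have := Finset.mem_range.1 hi; omega
      have hP1 := hPr i him
      have hP2 := hP'r i him
      have hw := (wt_pos m hd i).le
      have hc1 : (1:ℝ) ≤ (P' i : ℝ) := by exact_mod_cast hP2.1
      have hc2 : (P i : ℝ) ≤ N := by exact_mod_cast hP1.2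
      nlinarith
    have hwtk : wt m d k = (1/d) * S := wt_top m hd k hk1 hkm
    have htopterm : (1/d) * S ≤ wt m d k * ((P' k : ℝ) - P k) := by
      rw [hwtk]
      have : 0 < (1/d) * S := by positivity
      nlinarith
    have hdpos : (0:ℝ) < 1/d := by positivity
    nlinarith

lemma diff_eq {d : ℝ} (N m : ℕ) (hN : 0 < N)
    (P P' : ℕ → ℕ) (k : ℕ) (hkm : k < m)
    (htop : ∀ j, k < j → j < m → P j = P' j) :
    (∑ i ∈ Finset.range m, wt m d i * (((N:ℝ) - P i) / N))
      - (∑ i ∈ Finset.range m, wt m d i * (((N:ℝ) - P' i) / N))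
    = (1/(N:ℝ)) * ∑ i ∈ Finset.range (k+1), wt m d i * ((P' i : ℝ) - P i) := by
  rw [← Finset.sum_sub_distrib, Finset.mul_sum]
  rw [← Finset.sum_subset (Finset.range_subset_range.2 (by omega : k + 1 ≤ m))]
  · apply Finset.sum_congr rfl
    intro i _
    have hNne : ((N:ℝ)) ≠ 0 := by positivity
    field_simp
    ring
  · intro i hi hni
    have : P i = P' i := htop i (by simpa using hni) (Finset.mem_range.1 hi)
    rw [this]
    ring

/-- Yager-style leximin representation: with bottom-heavy weights
`w_1 = Δ^{m-1}/(1+Δ)^{m-1}` and `w_i = Δ^{m-i}/(1+Δ)^{m+1-i}` for `i > 1`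
(0-indexed below), where `Δ = 1/(N+ε)` with `ε ∈ (0,1)`, the linear functional
`x ↦ Σ w_i x_i` on allocation vectors `x_i = (N − P_i)/N` represents leximin:
for two distinct strictly increasing position vectors `P, P'` with values in
`{1,…,N}`, the weighted sum for `P` exceeds that of `P'` iff `P` is
leximin-preferred to `P'`. -/
theorem leximin_linear_representation
    (N m : ℕ) (hm : 1 ≤ m) (hmN : m ≤ N)
    (ε : ℝ) (hε0 : 0 < ε) (hε1 : ε < 1)
    (P P' : ℕ → ℕ)
    (hP : StrictMonoOn P (Set.Iio m)) (hP' : StrictMonoOn P' (Set.Iio m))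
    (hPr : ∀ i < m, 1 ≤ P i ∧ P i ≤ N) (hP'r : ∀ i < m, 1 ≤ P' i ∧ P' i ≤ N)
    (hne : ∃ j < m, P j ≠ P' j) :
    ((∑ i ∈ Finset.range m,
        (if i = 0 then (1 / ((N : ℝ) + ε)) ^ (m - 1) / (1 + 1 / ((N : ℝ) + ε)) ^ (m - 1)
         else (1 / ((N : ℝ) + ε)) ^ (m - 1 - i) / (1 + 1 / ((N : ℝ) + ε)) ^ (m - i))
        * (((N : ℝ) - (P i : ℝ)) / (N : ℝ)))
      > ∑ i ∈ Finset.range m,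
        (if i = 0 then (1 / ((N : ℝ) + ε)) ^ (m - 1) / (1 + 1 / ((N : ℝ) + ε)) ^ (m - 1)
         else (1 / ((N : ℝ) + ε)) ^ (m - 1 - i) / (1 + 1 / ((N : ℝ) + ε)) ^ (m - i))
        * (((N : ℝ) - (P' i : ℝ)) / (N : ℝ)))
    ↔ lexiPrefN m P P' := by
  have hN : 0 < N := by omega
  have hNε : (0:ℝ) < (N:ℝ) + ε := by positivity
  set d : ℝ := 1 / ((N:ℝ) + ε) with hddef
  have hd : 0 < d := by positivity
  have hdN : (N:ℝ) - 1 < 1/d := by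
    rw [hddef, one_div_one_div]; linarith
  have hshow : (∑ i ∈ Finset.range m,
        (if i = 0 then (1 / ((N : ℝ) + ε)) ^ (m - 1) / (1 + 1 / ((N : ℝ) + ε)) ^ (m - 1)
         else (1 / ((N : ℝ) + ε)) ^ (m - 1 - i) / (1 + 1 / ((N : ℝ) + ε)) ^ (m - i))
        * (((N : ℝ) - (P i : ℝ)) / (N : ℝ)))
      = ∑ i ∈ Finset.range m, wt m d i * (((N:ℝ) - P i) / N) := rfl
  have hshow' : (∑ i ∈ Finset.range m,
        (if i = 0 then (1 / ((N : ℝ) + ε)) ^ (m - 1) / (1 + 1 / ((N : ℝ) + ε)) ^ (m - 1)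
         else (1 / ((N : ℝ) + ε)) ^ (m - 1 - i) / (1 + 1 / ((N : ℝ) + ε)) ^ (m - i))
        * (((N : ℝ) - (P' i : ℝ)) / (N : ℝ)))
      = ∑ i ∈ Finset.range m, wt m d i * (((N:ℝ) - P' i) / N) := rfl
  rw [hshow, hshow', gt_iff_lt, ← sub_pos]
  have hNinv : (0:ℝ) < 1/(N:ℝ) := by positivity
  constructor
  · intro h
    -- take the largest differing index
    set s := (Finset.range m).filter (fun j => P j ≠ P' j) with hsdef
    have hs : s.Nonempty := by
      obtain ⟨j, hj, hjne⟩ := hne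
      exact ⟨j, by simp [hsdef, hj, hjne]⟩
    set k := s.max' hs with hkdef
    have hks : k ∈ s := s.max'_mem hs
    have hkm : k < m := by
      have := Finset.mem_filter.1 hks
      exact Finset.mem_range.1 this.1
    have hkne : P k ≠ P' k := (Finset.mem_filter.1 hks).2
    have htop : ∀ j, k < j → j < m → P j = P' j := by
      intro j hkj hjm
      by_contra hne'
      have : j ∈ s := Finset.mem_filter.2 ⟨Finset.mem_range.2 hjm, hne'⟩
      have := s.le_max' j this
      omega
    rw [diff_eq N m hN P P' k hkm htop] at h
    have hT : 0 < ∑ i ∈ Finset.range (k+1), wt m d i * ((P' i : ℝ) - P i) := by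
      by_contra hT'
      push_neg at hT'
      nlinarith
    have hPk : P k < P' k := by
      by_contra h'
      push_neg at h'
      have h'' : P' k < P k := lt_of_le_of_ne h' (Ne.symm hkne)
      have hneg := sum_pos_of_top N m hd hdN P' P hP'r hPr k hkm h''
      have heq : ∑ i ∈ Finset.range (k+1), wt m d i * ((P i : ℝ) - P' i)
          = -∑ i ∈ Finset.range (k+1), wt m d i * ((P' i : ℝ) - P i) := by
        rw [← Finset.sum_neg_distrib]
        exact Finset.sum_congr rfl (fun i _ => by ring)
      rw [heq] at hneg
      linarith
    exact ⟨k, hkm, hPk, htop⟩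
  · rintro ⟨k, hkm, hPk, htop⟩
    rw [diff_eq N m hN P P' k hkm htop]
    have := sum_pos_of_top N m hd hdN P P' hPr hP'r k hkm hPk
    positivity
end
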